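/- arXiv:0903.5033 — 2 statements merged into one kernel-verified Lean document; each statement's English description precedes it below -/
import Mathlib

section
/- Let R be a pseudo-valuation domain with associated valuation overring V and maximal ideal M. Then every overring of R is well-centered on R if and only if V/M is algebraic over R/M. -/
/-! Write `φ : V → V/M`, `R = φ⁻¹(k)` and `L` for the fraction field.

If `V/M` is algebraic over `k`, let `b` lie in an overring `S`. Since `V` is a valuation ring,
either `b⁻¹ ∈ M ⊆ R`, and then `b` is a unit of `S` with `b⁻¹ b = 1 ∈ R`, or `b = v ∈ V`.
For `v ∉ M`, `φ(v)⁻¹` is a polynomial over `k` in `φ(v)`, so `φ(v)⁻¹ = φ(c)` with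
`c ∈ R[v] ⊆ S`. Then `cv ∈ R` is a unit of `V` with inverse in `R`, so `c` is a unit of `S`
with `cb ∈ R`.

Conversely, for `x = φ(v)` the overring `φ⁻¹(k[x])` contains a unit `s` with `sv ∈ R`. Then
`φ(s)` is a nonzero polynomial `p(x)` with `x p(x) ∈ k`, so `x` is a root of `X p - c ≠ 0`. -/

open Polynomial in
theorem isAlgebraic_of_mem_adjoin_of_mul_mem_range {K A : Type*} [CommRing K] [CommRing A]
    [Algebra K A] {x a : A} (ha : a ∈ Algebra.adjoin K {x}) (ha0 : a ≠ 0)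
    (hax : a * x ∈ Set.range (algebraMap K A)) : IsAlgebraic K x := by
  rw [Algebra.adjoin_singleton_eq_range_aeval] at ha
  obtain ⟨p, rfl⟩ := ha
  obtain ⟨c, hc⟩ := hax
  have hp : p ≠ 0 := by rintro rfl; simp at ha0
  have : Nontrivial K := nontrivial_iff.mp (nontrivial_of_ne p 0 hp)
  refine ⟨X * p - C c, fun h => ?_, by simp [hc, mul_comm]⟩
  have := congrArg natDegree (sub_eq_zero.mp h)
  rw [natDegree_X_mul hp, natDegree_C] at this
  omega

theorem ValuationRing.exists_algebraMap_eq_or_mul_eq_one (V : Type*) {L : Type*} [CommRing V]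
    [IsDomain V] [ValuationRing V] [Field L] [Algebra V L] [IsFractionRing V L] (x : L) :
    (∃ v, algebraMap V L v = x) ∨ ∃ m ∈ IsLocalRing.maximalIdeal V, algebraMap V L m * x = 1 := by
  rcases isInteger_or_isInteger V x with hx | ⟨w, hw⟩
  · exact .inl hx
  by_cases hx0 : x = 0
  · exact .inl ⟨0, by rw [map_zero, hx0]⟩
  by_cases hwu : IsUnit w
  · obtain ⟨u, rfl⟩ := hwu
    refine .inl ⟨↑u⁻¹, ?_⟩
    rw [← mul_inv_eq_one₀ hx0, ← hw, ← map_mul, u.inv_mul, map_one]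
  · exact .inr ⟨w, (IsLocalRing.mem_maximalIdeal w).mpr hwu, by rw [hw, inv_mul_cancel₀ hx0]⟩

namespace Subring

variable {L : Type*} [CommRing L]

def IsWellCenteredOn (S R : Subring L) : Prop :=
  ∀ b : S, ∃ u : Sˣ, (((u : S) * b : S) : L) ∈ R

theorem exists_unit_mul_mem {S T : Subring L} (b : S) {a a' : L} (ha : a ∈ S) (ha' : a' ∈ S)
    (h : a * a' = 1) (hab : a * b ∈ T) : ∃ u : Sˣ, (((u : S) * b : S) : L) ∈ T :=
  ⟨⟨⟨a, ha⟩, ⟨a', ha'⟩, Subtype.ext h, Subtype.ext ((mul_comm a' a).trans h)⟩, hab⟩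

theorem apply_mem_map_iff {R : Type*} [Ring R] {f : R →+* L} (hf : Function.Injective f)
    {s : Subring R} {x : R} : f x ∈ s.map f ↔ x ∈ s :=
  hf.mem_set_image

end Subring

section PseudoValuationDomain

attribute [local instance] Ideal.Quotient.field

open Ideal.Quotient (mk)

variable {V : Type*} [CommRing V] (M : Ideal V) [M.IsMaximal] (k : Subfield (V ⧸ M))

theorem mem_comap_mk_of_mem {m : V} (hm : m ∈ M) : m ∈ k.toSubring.comap (mk M) := by
  rw [Subring.mem_comap, Ideal.Quotient.eq_zero_iff_mem.mpr hm]
  exact zero_mem k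

theorem map_mk_closure_insert_comap (v : V) :
    (Subring.closure (insert v (k.toSubring.comap (mk M)))).map (mk M) =
      (Algebra.adjoin k {mk M v}).toSubring := by
  rw [RingHom.map_closure, Algebra.adjoin_eq_ring_closure, Set.image_insert_eq, Subring.coe_comap,
    Set.image_preimage_eq _ Ideal.Quotient.mk_surjective, Set.union_singleton]
  exact congrArg _ (congrArg _ Subtype.range_coe.symm)

theorem exists_mem_closure_insert_comap_mk_mul_eq_one {v : V} (hv : v ∉ M)
    (halg : IsAlgebraic k (mk M v)) :
    ∃ c ∈ Subring.closure (insert v (k.toSubring.comap (mk M))), mk M (c * v) = 1 := by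
  have hinv := halg.isIntegral.inv_mem_adjoin
  rw [← Subalgebra.mem_toSubring, ← map_mk_closure_insert_comap] at hinv
  obtain ⟨c, hc, hcv⟩ := hinv
  refine ⟨c, hc, ?_⟩
  rw [map_mul, hcv, inv_mul_cancel₀ (Ideal.Quotient.eq_zero_iff_mem.not.mpr hv)]

variable {L : Type*}

theorem isAlgebraic_of_forall_isWellCenteredOn [CommRing L] [Algebra V L]
    (hι : Function.Injective (algebraMap V L))
    (H : ∀ S : Subring L, (k.toSubring.comap (mk M)).map (algebraMap V L) ≤ S →
      S.IsWellCenteredOn ((k.toSubring.comap (mk M)).map (algebraMap V L)))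
    (x : V ⧸ M) : IsAlgebraic k x := by
  obtain ⟨v, rfl⟩ := Ideal.Quotient.mk_surjective x
  set A := (Algebra.adjoin k {mk M v}).toSubring.comap (mk M)
  have hRA : k.toSubring.comap (mk M) ≤ A := fun r hr =>
    (Algebra.adjoin k {mk M v}).algebraMap_mem (⟨_, hr⟩ : k)
  have hvA : v ∈ A := Algebra.self_mem_adjoin_singleton k _
  obtain ⟨u, hu⟩ := H (A.map (algebraMap V L)) ((Subring.gc_map_comap _).monotone_l hRA)
    ⟨_, v, hvA, rfl⟩
  obtain ⟨s, hsA, hsu⟩ := Subring.mem_map.mp (u : A.map (algebraMap V L)).2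
  obtain ⟨t, -, htu⟩ := Subring.mem_map.mp (↑u⁻¹ : A.map (algebraMap V L)).2
  have hs : IsUnit s := IsUnit.of_mul_eq_one t <| hι <| by
    rw [map_mul, hsu, htu, map_one, ← Subring.coe_mul, u.mul_inv, Subring.coe_one]
  have hsv : s * v ∈ k.toSubring.comap (mk M) := by
    rw [← Subring.apply_mem_map_iff hι, map_mul, hsu]
    exact hu
  exact isAlgebraic_of_mem_adjoin_of_mul_mem_range hsA (hs.map (mk M)).ne_zero
    ⟨⟨_, hsv⟩, map_mul (mk M) s v⟩

theorem exists_unit_mul_mem_of_algebraMap_eq [IsLocalRing V] [CommRing L] [Algebra V L]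
    {S : Subring L} (hS : (k.toSubring.comap (mk M)).map (algebraMap V L) ≤ S) (b : S) {v : V}
    (hv : algebraMap V L v = b) (hvM : v ∉ M) (halg : IsAlgebraic k (mk M v)) :
    ∃ u : Sˣ, (((u : S) * b : S) : L) ∈ (k.toSubring.comap (mk M)).map (algebraMap V L) := by
  obtain ⟨c, hc, hcv⟩ := exists_mem_closure_insert_comap_mk_mul_eq_one M k hvM halg
  have hcvR : mk M (c * v) ∈ k := hcv ▸ one_mem k
  obtain ⟨w, hw⟩ : IsUnit (c * v) := by
    rw [← IsLocalRing.notMem_maximalIdeal, ← IsLocalRing.eq_maximalIdeal ‹M.IsMaximal›,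
      ← Ideal.Quotient.eq_zero_iff_mem, hcv]
    exact one_ne_zero
  have hwR : mk M ↑w⁻¹ ∈ k := by simp [hw ▸ hcv]
  have hcS : c ∈ S.comap (algebraMap V L) :=
    (Subring.closure_le (t := S.comap (algebraMap V L))).mpr
      (Set.insert_subset (show algebraMap V L v ∈ S from hv ▸ b.2) fun r hr => hS ⟨r, hr, rfl⟩) hc
  refine Subring.exists_unit_mul_mem b hcS (S.mul_mem b.2 (hS ⟨_, hwR, rfl⟩)) ?_ ?_
  · rw [← hv, ← mul_assoc, ← map_mul, ← map_mul, ← hw, w.mul_inv, map_one]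
  · rw [← hv, ← map_mul]
    exact ⟨_, hcvR, rfl⟩

theorem isWellCenteredOn_of_isAlgebraic [IsDomain V] [ValuationRing V] [Field L] [Algebra V L]
    [IsFractionRing V L] (halg : ∀ x : V ⧸ M, IsAlgebraic k x) {S : Subring L}
    (hS : (k.toSubring.comap (mk M)).map (algebraMap V L) ≤ S) :
    S.IsWellCenteredOn ((k.toSubring.comap (mk M)).map (algebraMap V L)) := by
  intro b
  rcases ValuationRing.exists_algebraMap_eq_or_mul_eq_one V (b : L) with ⟨v, hv⟩ | ⟨m, hm, hmb⟩
  · by_cases hvM : v ∈ M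
    · refine ⟨1, ?_⟩
      rw [Units.val_one, one_mul, ← hv]
      exact ⟨_, mem_comap_mk_of_mem M k hvM, rfl⟩
    · exact exists_unit_mul_mem_of_algebraMap_eq M k hS b hv hvM (halg _)
  · have hmM : m ∈ M := IsLocalRing.eq_maximalIdeal ‹M.IsMaximal› ▸ hm
    refine Subring.exists_unit_mul_mem b (hS ⟨_, mem_comap_mk_of_mem M k hmM, rfl⟩) b.2 hmb ?_
    rw [hmb]
    exact one_mem _

end PseudoValuationDomain

theorem PVD_every_overring_wellCentered_iff_residue_algebraic_general
    (V : Type*) [CommRing V] [IsDomain V] [ValuationRing V]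
    (M : Ideal V) [hM : M.IsMaximal]
    (R : Subring V)
    (R' : Subring (FractionRing V))
    (hR' : R' = Subring.map (algebraMap V (FractionRing V)) R) :
    letI : Field (V ⧸ M) := Ideal.Quotient.field M
    ∀ k : Subfield (V ⧸ M), R = Subring.comap (Ideal.Quotient.mk M) k.toSubring →
    ((∀ S : Subring (FractionRing V), R' ≤ S →
        ∀ b : S, ∃ u : Sˣ, (((u : S) * b : S) : FractionRing V) ∈ R') ↔
      (∀ x : V ⧸ M, IsAlgebraic k x)) := by
  intro k hk
  subst hk hR'
  exact ⟨isAlgebraic_of_forall_isWellCenteredOn M k (IsFractionRing.injective V _),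
    fun halg S hS => isWellCenteredOn_of_isAlgebraic M k halg hS⟩

/-- Let `R` be a pseudo-valuation domain with associated valuation overring `V` and maximal
ideal `M` (so `R = φ⁻¹(k)` for a subfield `k` of `K = V/M`, with `φ : V → V/M` the quotient
map).  Viewing `R` inside the common quotient field `L` of `R` and `V`, every overring of `R`
is well-centered on `R` iff `V/M` is algebraic over `R/M` (identified with `k`). -/
theorem PVD_every_overring_wellCentered_iff_residue_algebraic
    (V : Type*) [CommRing V] [IsDomain V] [ValuationRing V]
    (M : Ideal V) [hM : M.IsMaximal] (hMmax : M = IsLocalRing.maximalIdeal V)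
    (R : Subring V)
    (R' : Subring (FractionRing V))
    (hR' : R' = Subring.map (algebraMap V (FractionRing V)) R) :
    letI : Field (V ⧸ M) := Ideal.Quotient.field M
    ∀ k : Subfield (V ⧸ M), R = Subring.comap (Ideal.Quotient.mk M) k.toSubring →
    ((∀ S : Subring (FractionRing V), R' ≤ S →
        ∀ b : S, ∃ u : Sˣ, (((u : S) * b : S) : FractionRing V) ∈ R') ↔
      (∀ x : V ⧸ M, IsAlgebraic k x)) :=
  PVD_every_overring_wellCentered_iff_residue_algebraic_general V M (hM := hM) R R' hR'
end

section
/- Let A ⊆ B be an extension of commutative rings, E a B-module, R = A ⋉ E and T = B ⋉ E. Then T is well-centered on R if and only if B is well-centered on A, where 'well-centered' means: every element of the larger ring is a unit of the larger ring times an element of the smaller ring. -/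
/-!
Only multiplicativity matters: `fst : B ⋉ E → B` is a multiplicative retraction of
`inl : B → B ⋉ E`. Units of `B ⋉ E` project to units of `B` (test on `inl b`), and units of `B`
include into units of `B ⋉ E` (test on `fst t`).
-/

open TrivSqZeroExt

/-- For a module over a commutative ring, the canonical right (opposite) module structure. -/
noncomputable instance commMopModule (K : Type*) [CommRing K] (E : Type*) [AddCommGroup E]
    [Module K E] : Module Kᵐᵒᵖ E :=
  Module.compHom E ((RingHom.id K).fromOpposite mul_comm)

instance commMopCentral (K : Type*) [CommRing K] (E : Type*) [AddCommGroup E] [Module K E] :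
    IsCentralScalar K E :=
  ⟨fun _ _ => rfl⟩

/-- The first projection of a trivial extension, as a ring homomorphism. -/
noncomputable def fstRingHom (K : Type*) [CommRing K] (E : Type*) [AddCommGroup E]
    [Module K E] : TrivSqZeroExt K E →+* K where
  toFun := fst
  map_one' := rfl
  map_mul' := fst_mul
  map_zero' := rfl
  map_add' := fst_add

def IsWellCenteredOn {M : Type*} [Monoid M] (S : Set M) : Prop :=
  ∀ x : M, ∃ u : Mˣ, (u : M) * x ∈ S

theorem isWellCenteredOn_preimage_iff {M N : Type*} [Monoid M] [Monoid N] {f : M →* N}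
    {g : N →* M} (hfg : Function.LeftInverse f g) (S : Set N) :
    IsWellCenteredOn (f ⁻¹' S) ↔ IsWellCenteredOn S := by
  constructor
  · intro hM y
    obtain ⟨u, hu⟩ := hM (g y)
    refine ⟨Units.map f u, ?_⟩
    simpa only [Set.mem_preimage, Units.coe_map, MonoidHom.coe_coe, map_mul, hfg y] using hu
  · intro hN x
    obtain ⟨v, hv⟩ := hN (f x)
    refine ⟨Units.map g v, ?_⟩
    simpa only [Set.mem_preimage, Units.coe_map, MonoidHom.coe_coe, map_mul, hfg (v : N)] using hv

/-- For an extension `A ⊆ B` of commutative rings and a `B`-module `E`, the trivial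
extension `T = B ⋉ E` is well-centered on `R = A ⋉ E` iff `B` is well-centered on `A`. -/
theorem trivial_extension_wellCentered_iff
    (B : Type*) [CommRing B] (A : Subring B)
    (E : Type*) [AddCommGroup E] [Module B E] :
    (∀ t : TrivSqZeroExt B E, ∃ u : (TrivSqZeroExt B E)ˣ,
        fst ((u : TrivSqZeroExt B E) * t) ∈ A) ↔
    (∀ b : B, ∃ u : Bˣ, (u : B) * b ∈ A) :=
  isWellCenteredOn_preimage_iff (f := (fstRingHom B E : TrivSqZeroExt B E →* B))
    (g := (inlHom B E : B →* TrivSqZeroExt B E)) (fun _ => rfl) A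
end
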